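/- Let Z be a network zero-sum game with unique interior QRE p for exploration rates T_k > 0 and let G satisfy d(Z,G) < δ. Then any trajectory x(t) of the Q-learning dynamics on G satisfies lim sup_{t→∞} D_KL(p‖x(t)) ≤ N δ / T_min, where T_min = min_k T_k and N is the number of players. -/

import Mathlib

open Function

/-- A mixed strategy: a point of the probability simplex. -/
def IsSimplex {n : ℕ} (x : Fin n → ℝ) : Prop :=
  (∀ i, 0 ≤ x i) ∧ ∑ i, x i = 1

/-- The reward vector of player `k` in a network game. -/
def netReward {N : ℕ} {n : Fin N → ℕ} (E : Finset (Fin N × Fin N))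
    (A : ∀ k l : Fin N, Matrix (Fin (n k)) (Fin (n l)) ℝ)
    (x : ∀ l, Fin (n l) → ℝ) (k : Fin N) (i : Fin (n k)) : ℝ :=
  ∑ l ∈ Finset.univ.filter (fun l => (k, l) ∈ E), ∑ j, A k l i j * x l j

/-!
Lyapunov argument for `V(t) = ∑ₖ KL(pₖ ‖ xₖ(t))`. Along the Q-learning flow
`V' = ∑ₖ ⟨xₖ - pₖ, rₖ(x)⟩ - Tₖ ⟨xₖ - pₖ, log xₖ⟩`. Replacing the rewards `rₖ(x)` of `G` by the
network rewards `uₖ(x)` of `Z` costs less than `δ` per player. The QRE equations say that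
`uₖ(p) = Tₖ log pₖ` up to an additive constant, and the zero-sum condition, polarised over the
convex product of simplices, makes `∑ₖ ⟨xₖ - pₖ, uₖ(x) - uₖ(p)⟩` vanish. What remains is
`-∑ₖ Tₖ (KL(pₖ‖xₖ) + KL(xₖ‖pₖ)) ≤ -T_min V`, so `V' ≤ Nδ - T_min V`, and Grönwall's inequality
gives `lim sup V ≤ Nδ / T_min`.
-/

open Real Filter Topology Set

theorem limsup_le_div_of_hasDerivAt_le_sub_mul {V V' : ℝ → ℝ} {a c : ℝ} (ha : 0 < a)
    (hV : ∀ t, HasDerivAt V (V' t) t) (hV' : ∀ t, V' t ≤ c - a * V t)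
    (hbdd : BddBelow (range V)) :
    limsup V atTop ≤ c / a := by
  have hgronwall : ∀ t, 0 ≤ t → V t ≤ gronwallBound (V 0) (-a) c t := fun t ht => by
    simpa using le_gronwallBound_of_liminf_deriv_right_le
      (continuous_iff_continuousAt.2 fun s => (hV s).continuousAt).continuousOn
      (fun s _ _ hr => (hV s).hasDerivWithinAt.liminf_right_slope_le hr) le_rfl
      (fun s _ => by linarith [hV' s]) t ⟨ht, le_rfl⟩
  have hlim : Tendsto (gronwallBound (V 0) (-a) c) atTop (𝓝 (c / a)) := by
    have hexp : Tendsto (fun t => exp (-a * t)) atTop (𝓝 0) :=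
      (tendsto_exp_neg_atTop_nhds_zero.comp (tendsto_id.const_mul_atTop ha)).congr
        fun t => by simp
    rw [gronwallBound_of_K_ne_0 (neg_ne_zero.2 ha.ne')]
    convert (hexp.const_mul (V 0)).add ((hexp.sub_const 1).const_mul (c / -a)) using 2
    field_simp
    ring
  calc limsup V atTop
      ≤ limsup (gronwallBound (V 0) (-a) c) atTop :=
        limsup_le_limsup ((eventually_ge_atTop 0).mono hgronwall)
          hbdd.isBoundedUnder_of_range.isCoboundedUnder_le hlim.isBoundedUnder_le
    _ = c / a := hlim.limsup_eq

section FiniteDistribution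

variable {ι : Type*} [Fintype ι]

noncomputable def relEntropy (p q : ι → ℝ) : ℝ := ∑ i, p i * log (p i / q i)

theorem sub_le_mul_log_div {a b : ℝ} (ha : 0 < a) (hb : 0 < b) : a - b ≤ a * log (a / b) := by
  have h := one_sub_inv_le_log_of_pos (div_pos ha hb)
  rw [inv_div] at h
  calc a - b = a * (1 - b / a) := by field_simp
    _ ≤ a * log (a / b) := mul_le_mul_of_nonneg_left h ha.le

theorem relEntropy_nonneg {p q : ι → ℝ} (hp : ∀ i, 0 < p i) (hq : ∀ i, 0 < q i)
    (hsum : ∑ i, q i ≤ ∑ i, p i) : 0 ≤ relEntropy p q :=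
  calc 0 ≤ ∑ i, p i - ∑ i, q i := sub_nonneg.2 hsum
    _ = ∑ i, (p i - q i) := (Finset.sum_sub_distrib ..).symm
    _ ≤ relEntropy p q := Finset.sum_le_sum fun i _ => sub_le_mul_log_div (hp i) (hq i)

theorem relEntropy_add_relEntropy {p x : ι → ℝ} (hp : ∀ i, p i ≠ 0) (hx : ∀ i, x i ≠ 0) :
    relEntropy p x + relEntropy x p = ∑ i, (x i - p i) * (log (x i) - log (p i)) := by
  rw [relEntropy, relEntropy, ← Finset.sum_add_distrib]
  refine Finset.sum_congr rfl fun i _ => ?_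
  rw [log_div (hp i) (hx i), log_div (hx i) (hp i)]
  ring

theorem hasDerivAt_relEntropy {p : ι → ℝ} {x : ℝ → ι → ℝ} {x' : ι → ℝ} {s : ℝ}
    (hp : ∀ i, p i ≠ 0) (hx : ∀ i, x s i ≠ 0) (hx' : ∀ i, HasDerivAt (fun t => x t i) (x' i) s) :
    HasDerivAt (fun t => relEntropy p (x t)) (-∑ i, p i * (x' i / x s i)) s := by
  rw [← Finset.sum_neg_distrib]
  refine HasDerivAt.fun_sum fun i _ => ?_
  refine ((((hasDerivAt_const s (p i)).fun_div (hx' i) (hx i)).log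
    (div_ne_zero (hp i) (hx i))).const_mul (p i)).congr_deriv ?_
  field_simp [hp i, hx i]
  ring

noncomputable def qLearningField (T : ℝ) (r x : ι → ℝ) (i : ι) : ℝ :=
  x i * (r i - ∑ j, x j * r j + T * ∑ j, x j * log (x j / x i))

theorem neg_sum_mul_qLearningField_div {T : ℝ} {r x p : ι → ℝ} (hx : ∀ i, x i ≠ 0)
    (hxs : ∑ i, x i = 1) (hps : ∑ i, p i = 1) :
    -∑ i, p i * (qLearningField T r x i / x i) =
      ∑ i, (x i - p i) * r i - T * ∑ i, (x i - p i) * log (x i) := by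
  have hentropy : ∀ i, ∑ j, x j * log (x j / x i) = ∑ j, x j * log (x j) - log (x i) := by
    intro i
    simp only [log_div (hx _) (hx i), mul_sub, Finset.sum_sub_distrib, ← Finset.sum_mul, hxs,
      one_mul]
  have hterm : ∀ i, p i * (qLearningField T r x i / x i) = p i * r i - (∑ j, x j * r j) * p i
      + (T * ∑ j, x j * log (x j)) * p i - T * (p i * log (x i)) := fun i => by
    rw [qLearningField, mul_div_cancel_left₀ _ (hx i), hentropy i]
    ring
  simp only [hterm, sub_mul, Finset.sum_add_distrib, Finset.sum_sub_distrib, ← Finset.mul_sum, hps]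
  ring

theorem exists_eq_mul_log_add_of_softmax {T : ℝ} {u p : ι → ℝ} (hT : T ≠ 0)
    (hsoft : ∀ i, p i = exp (u i / T) / ∑ j, exp (u j / T)) :
    ∃ c, ∀ i, u i = T * log (p i) + c := by
  refine ⟨T * log (∑ j, exp (u j / T)), fun i => ?_⟩
  have hZ : 0 < ∑ j, exp (u j / T) := Finset.sum_pos (fun j _ => exp_pos _) ⟨i, Finset.mem_univ i⟩
  rw [hsoft i, log_div (exp_ne_zero _) hZ.ne', log_exp]
  field_simp
  ring

theorem sum_sub_mul_eq_mul_sum_sub_mul_log_of_softmax {T : ℝ} {u p x : ι → ℝ} (hT : T ≠ 0)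
    (hsoft : ∀ i, p i = exp (u i / T) / ∑ j, exp (u j / T)) (hsum : ∑ i, x i = ∑ i, p i) :
    ∑ i, (x i - p i) * u i = T * ∑ i, (x i - p i) * log (p i) := by
  obtain ⟨c, hc⟩ := exists_eq_mul_log_add_of_softmax hT hsoft
  simp only [hc, mul_add, Finset.sum_add_distrib, ← Finset.sum_mul, Finset.sum_sub_distrib, hsum,
    sub_self, zero_mul, add_zero, Finset.mul_sum]
  exact Finset.sum_congr rfl fun i _ => by ring

end FiniteDistribution

theorem LinearMap.BilinForm.apply_sub_sub_eq_zero_of_convex {𝕜 M : Type*} [Field 𝕜]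
    [LinearOrder 𝕜] [IsStrictOrderedRing 𝕜] [AddCommGroup M] [Module 𝕜 M]
    (B : LinearMap.BilinForm 𝕜 M) {S : Set M} (hS : Convex 𝕜 S) (hB : ∀ x ∈ S, B x x = 0)
    {a b : M} (ha : a ∈ S) (hb : b ∈ S) : B (a - b) (a - b) = 0 := by
  -- `B` vanishes at the midpoint of `a` and `b`
  have hmid := hB _ (hS ha hb (by norm_num : (0 : 𝕜) ≤ 1 / 2) (by norm_num : (0 : 𝕜) ≤ 1 / 2)
    (by norm_num))
  simp only [map_add, map_smul, map_sub, LinearMap.add_apply, LinearMap.smul_apply,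
    LinearMap.sub_apply, smul_eq_mul, hB a ha, hB b hb] at hmid ⊢
  linarith

section NetworkGame

variable {N : ℕ} {n : Fin N → ℕ} (E : Finset (Fin N × Fin N))
  (A : ∀ k l : Fin N, Matrix (Fin (n k)) (Fin (n l)) ℝ)

theorem netReward_sub (x y : ∀ l, Fin (n l) → ℝ) (k : Fin N) (i : Fin (n k)) :
    netReward E A (x - y) k i = netReward E A x k i - netReward E A y k i := by
  simp only [netReward, Pi.sub_apply, mul_sub, Finset.sum_sub_distrib]

def netPayoff : LinearMap.BilinForm ℝ (∀ l, Fin (n l) → ℝ) :=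
  LinearMap.mk₂ ℝ (fun x y => ∑ k, ∑ i, x k i * netReward E A y k i)
    (fun x x' y => by simp only [Pi.add_apply, add_mul, Finset.sum_add_distrib])
    (fun c x y => by simp only [Pi.smul_apply, smul_eq_mul, mul_assoc, Finset.mul_sum])
    (fun x y y' => by
      simp only [netReward, Pi.add_apply, mul_add, Finset.sum_add_distrib])
    (fun c x y => by
      simp only [netReward, Pi.smul_apply, smul_eq_mul, Finset.mul_sum]
      exact Finset.sum_congr rfl fun _ _ => Finset.sum_congr rfl fun _ _ =>
        Finset.sum_congr rfl fun _ _ => Finset.sum_congr rfl fun _ _ => by ring)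

theorem netPayoff_apply (x y : ∀ l, Fin (n l) → ℝ) :
    netPayoff E A x y = ∑ k, ∑ i, x k i * netReward E A y k i :=
  rfl

variable {E A}

theorem sum_sub_mul_netReward_sub_eq_zero
    (hzs : ∀ x : ∀ l, Fin (n l) → ℝ, (∀ l, IsSimplex (x l)) →
      ∑ k, ∑ i, x k i * netReward E A x k i = 0)
    {x y : ∀ l, Fin (n l) → ℝ} (hx : ∀ l, IsSimplex (x l)) (hy : ∀ l, IsSimplex (y l)) :
    ∑ k, ∑ i, (x k i - y k i) * (netReward E A x k i - netReward E A y k i) = 0 := by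
  have h := (netPayoff E A).apply_sub_sub_eq_zero_of_convex
    (S := Set.univ.pi fun l => stdSimplex ℝ (Fin (n l)))
    (convex_pi fun l _ => convex_stdSimplex ℝ _) (fun z hz => hzs z fun l => hz l trivial)
    (fun l _ => hx l) (fun l _ => hy l)
  simpa only [netPayoff_apply, Pi.sub_apply, netReward_sub] using h

theorem sum_neg_sum_mul_qLearningField_div_le
    (hzs : ∀ x : ∀ l, Fin (n l) → ℝ, (∀ l, IsSimplex (x l)) →
      ∑ k, ∑ i, x k i * netReward E A x k i = 0)
    {T : Fin N → ℝ} {τ δ : ℝ} (hT : ∀ k, 0 < T k) (hτ : ∀ k, τ ≤ T k)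
    {p y ρ : ∀ l, Fin (n l) → ℝ} (hpPos : ∀ k i, 0 < p k i) (hp : ∀ l, IsSimplex (p l))
    (hQRE : ∀ (k : Fin N) (i : Fin (n k)),
      p k i = exp (netReward E A p k i / T k) / ∑ j, exp (netReward E A p k j / T k))
    (hyPos : ∀ k i, 0 < y k i) (hy : ∀ l, IsSimplex (y l))
    (hρ : ∀ k, |(∑ i, p k i * netReward E A y k i) - (∑ i, y k i * netReward E A y k i) -
      ((∑ i, p k i * ρ k i) - (∑ i, y k i * ρ k i))| < δ) :
    ∑ k, -∑ i, p k i * (qLearningField (T k) (ρ k) (y k) i / y k i) ≤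
      N * δ - τ * ∑ k, relEntropy (p k) (y k) := by
  have hplayer : ∀ k, -∑ i, p k i * (qLearningField (T k) (ρ k) (y k) i / y k i) ≤
      δ + ∑ i, (y k i - p k i) * (netReward E A y k i - netReward E A p k i) -
        τ * relEntropy (p k) (y k) := by
    intro k
    have hgap : ∑ i, (y k i - p k i) * ρ k i < δ + ∑ i, (y k i - p k i) * netReward E A y k i := by
      simp only [sub_mul, Finset.sum_sub_distrib]
      linarith [(abs_lt.1 (hρ k)).2]
    have hlogit := sum_sub_mul_eq_mul_sum_sub_mul_log_of_softmax (x := y k) (hT k).ne' (hQRE k)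
      ((hy k).2.trans (hp k).2.symm)
    have hpy := relEntropy_nonneg (hpPos k) (hyPos k) ((hy k).2.trans (hp k).2.symm).le
    have hyp := relEntropy_nonneg (hyPos k) (hpPos k) ((hp k).2.trans (hy k).2.symm).le
    have hdissip : τ * relEntropy (p k) (y k) ≤
        T k * ∑ i, (y k i - p k i) * (log (y k i) - log (p k i)) := by
      rw [← relEntropy_add_relEntropy (fun i => (hpPos k i).ne') (fun i => (hyPos k i).ne')]
      have hTk := (hT k).le
      calc τ * relEntropy (p k) (y k) ≤ T k * relEntropy (p k) (y k) := by gcongr; exact hτ k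
        _ ≤ _ := by gcongr; linarith
    rw [neg_sum_mul_qLearningField_div (fun i => (hyPos k i).ne') (hy k).2 (hp k).2]
    simp only [mul_sub, Finset.sum_sub_distrib] at hdissip ⊢
    linarith
  calc ∑ k, -∑ i, p k i * (qLearningField (T k) (ρ k) (y k) i / y k i)
      ≤ ∑ k, (δ + ∑ i, (y k i - p k i) * (netReward E A y k i - netReward E A p k i) -
          τ * relEntropy (p k) (y k)) := Finset.sum_le_sum fun k _ => hplayer k
    _ = N * δ + ∑ k, ∑ i, (y k i - p k i) * (netReward E A y k i - netReward E A p k i) -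
          τ * ∑ k, relEntropy (p k) (y k) := by
      simp only [Finset.sum_sub_distrib, Finset.sum_add_distrib, Finset.sum_const,
        Finset.card_univ, Fintype.card_fin, nsmul_eq_mul, Finset.mul_sum]
    _ = N * δ - τ * ∑ k, relEntropy (p k) (y k) := by
      rw [sum_sub_mul_netReward_sub_eq_zero hzs hy hp, add_zero]

end NetworkGame

theorem KL_limsup_near_nzsg_general {N : ℕ} (hN : 0 < N) {n : Fin N → ℕ}
    -- the network zero-sum game `Z`:
    (E : Finset (Fin N × Fin N))
    (A : ∀ k l : Fin N, Matrix (Fin (n k)) (Fin (n l)) ℝ)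
    (hzs : ∀ x : ∀ l, Fin (n l) → ℝ, (∀ l, IsSimplex (x l)) →
      ∑ k, ∑ i, x k i * netReward E A x k i = 0)
    -- the game `G`, given by reward functions depending only on opponents' strategies:
    (r : (∀ l, Fin (n l) → ℝ) → ∀ k, Fin (n k) → ℝ)
    -- `d(Z, G) < δ`:
    (δ : ℝ)
    (hd : ∀ (k : Fin N) (x : ∀ l, Fin (n l) → ℝ) (y : Fin (n k) → ℝ),
      (∀ l, IsSimplex (x l)) → IsSimplex y →
      |(∑ i, y i * netReward E A x k i) - (∑ i, x k i * netReward E A x k i) -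
        ((∑ i, y i * r x k i) - (∑ i, x k i * r x k i))| < δ)
    -- exploration rates:
    (T : Fin N → ℝ) (hT : ∀ k, 0 < T k)
    -- `p` is the unique interior QRE of `Z`:
    (p : ∀ l, Fin (n l) → ℝ) (hpPos : ∀ k i, 0 < p k i) (hp : ∀ l, IsSimplex (p l))
    (hQRE : ∀ (k : Fin N) (i : Fin (n k)),
      p k i = Real.exp (netReward E A p k i / T k) /
        ∑ j, Real.exp (netReward E A p k j / T k))
    -- a trajectory of the Q-learning dynamics on `G`:
    (x : ℝ → ∀ l, Fin (n l) → ℝ)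
    (hxPos : ∀ s k i, 0 < x s k i) (hxS : ∀ s l, IsSimplex (x s l))
    (hdyn : ∀ (s : ℝ) (k : Fin N) (i : Fin (n k)),
      HasDerivAt (fun τ => x τ k i)
        (x s k i * (r (x s) k i - (∑ j, x s k j * r (x s) k j) +
          T k * ∑ j, x s k j * Real.log (x s k j / x s k i))) s) :
    Filter.limsup (fun t => ∑ k, ∑ i, p k i * Real.log (p k i / x t k i)) Filter.atTop ≤
      (N : ℝ) * δ / (⨅ k, T k) := by
  have : Nonempty (Fin N) := ⟨⟨0, hN⟩⟩
  have hTmin : 0 < ⨅ k, T k := by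
    obtain ⟨k₀, hk₀⟩ := Finite.exists_min T
    exact (hT k₀).trans_le (le_ciInf hk₀)
  refine limsup_le_div_of_hasDerivAt_le_sub_mul (V := fun t => ∑ k, relEntropy (p k) (x t k))
    hTmin (fun s => HasDerivAt.fun_sum fun k _ => hasDerivAt_relEntropy
      (fun i => (hpPos k i).ne') (fun i => (hxPos s k i).ne') (hdyn s k)) (fun s => ?_) ⟨0, ?_⟩
  · exact sum_neg_sum_mul_qLearningField_div_le hzs hT
      (fun k => ciInf_le (Finite.bddBelow_range T) k) hpPos hp hQRE (hxPos s) (hxS s)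
      (fun k => hd k (x s) (p k) (hxS s) (hp k))
  · rintro _ ⟨t, rfl⟩
    exact Finset.sum_nonneg fun k _ => relEntropy_nonneg (hpPos k) (hxPos t k)
      ((hxS t k).2.trans (hp k).2.symm).le

/-- Theorem: Q-learning on a game `G` with `d(Z, G) < δ` for a network zero-sum game `Z`
with unique interior QRE `p` satisfies `lim sup_{t→∞} D_KL(p‖x(t)) ≤ Nδ/T_min`. -/
theorem KL_limsup_near_nzsg {N : ℕ} (hN : 0 < N) {n : Fin N → ℕ}
    -- the network zero-sum game `Z`:
    (E : Finset (Fin N × Fin N)) (hE : ∀ k, (k, k) ∉ E)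
    (A : ∀ k l : Fin N, Matrix (Fin (n k)) (Fin (n l)) ℝ)
    (hzs : ∀ x : ∀ l, Fin (n l) → ℝ, (∀ l, IsSimplex (x l)) →
      ∑ k, ∑ i, x k i * netReward E A x k i = 0)
    -- the game `G`, given by reward functions depending only on opponents' strategies:
    (r : (∀ l, Fin (n l) → ℝ) → ∀ k, Fin (n k) → ℝ)
    (hr : ∀ (k : Fin N) (x : ∀ l, Fin (n l) → ℝ) (y : Fin (n k) → ℝ),
      r (update x k y) k = r x k)
    -- `d(Z, G) < δ`:
    (δ : ℝ) (hδ : 0 < δ)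
    (hd : ∀ (k : Fin N) (x : ∀ l, Fin (n l) → ℝ) (y : Fin (n k) → ℝ),
      (∀ l, IsSimplex (x l)) → IsSimplex y →
      |(∑ i, y i * netReward E A x k i) - (∑ i, x k i * netReward E A x k i) -
        ((∑ i, y i * r x k i) - (∑ i, x k i * r x k i))| < δ)
    -- exploration rates:
    (T : Fin N → ℝ) (hT : ∀ k, 0 < T k)
    -- `p` is the unique interior QRE of `Z`:
    (p : ∀ l, Fin (n l) → ℝ) (hpPos : ∀ k i, 0 < p k i) (hp : ∀ l, IsSimplex (p l))
    (hQRE : ∀ (k : Fin N) (i : Fin (n k)),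
      p k i = Real.exp (netReward E A p k i / T k) /
        ∑ j, Real.exp (netReward E A p k j / T k))
    (hUnique : ∀ q : ∀ l, Fin (n l) → ℝ, (∀ l, IsSimplex (q l)) →
      (∀ (k : Fin N) (i : Fin (n k)),
        q k i = Real.exp (netReward E A q k i / T k) /
          ∑ j, Real.exp (netReward E A q k j / T k)) → q = p)
    -- a trajectory of the Q-learning dynamics on `G`:
    (x : ℝ → ∀ l, Fin (n l) → ℝ)
    (hxPos : ∀ s k i, 0 < x s k i) (hxS : ∀ s l, IsSimplex (x s l))
    (hdyn : ∀ (s : ℝ) (k : Fin N) (i : Fin (n k)),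
      HasDerivAt (fun τ => x τ k i)
        (x s k i * (r (x s) k i - (∑ j, x s k j * r (x s) k j) +
          T k * ∑ j, x s k j * Real.log (x s k j / x s k i))) s) :
    Filter.limsup (fun t => ∑ k, ∑ i, p k i * Real.log (p k i / x t k i)) Filter.atTop ≤
      (N : ℝ) * δ / (⨅ k, T k) :=
  KL_limsup_near_nzsg_general hN E A hzs r δ hd T hT p hpPos hp hQRE x hxPos hxS hdyn
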